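/- Let (H,J) be a Krein space, S a pseudo-regular subspace with S = M [∔] S° for a regular subspace M, and Q₁, Q₂ ∈ Q_S two J-normal projections with range S and R(QᵢQᵢ^#) = M for i = 1, 2. Then there exists U ∈ U_J with U(M) = M and U(S°) = S° such that Q₂ = U Q₁ U^#; i.e., the group U_{M,S°} = {U ∈ U_J : U(M) = M, U(S°) = S°} acts transitively on Q_{S,M} = {Q ∈ Q_S : R(QQ^#) = M}. -/

import Mathlib

open ContinuousLinearMap

variable {H : Type*} [NormedAddCommGroup H] [InnerProductSpace ℂ H] [CompleteSpace H]

/-- The `J`-adjoint `T^# = J T* J`. -/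
noncomputable def sharp (J T : H →L[ℂ] H) : H →L[ℂ] H :=
  J ∘L (ContinuousLinearMap.adjoint T) ∘L J

/-- The `J`-orthogonal companion `S^{[⊥]} = {f : [g,f] = 0 ∀ g ∈ S}` where `[g,f] = ⟪J g, f⟫`. -/
def jperp (J : H →L[ℂ] H) (S : Submodule ℂ H) : Submodule ℂ H where
  carrier := {f | ∀ g ∈ S, (inner ℂ (J g) f : ℂ) = 0}
  add_mem' := by
    intro a b ha hb g hg
    rw [inner_add_right, ha g hg, hb g hg, add_zero]
  zero_mem' := by
    intro g hg
    simp
  smul_mem' := by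
    intro c a ha g hg
    rw [inner_smul_right, ha g hg, mul_zero]

/-- A (closed) subspace `M` is regular if `M [∔] M^{[⊥]} = H`. -/
def KreinRegular (J : H →L[ℂ] H) (M : Submodule ℂ H) : Prop :=
  IsClosed (M : Set H) ∧ M ⊔ jperp J M = ⊤ ∧ M ⊓ jperp J M = ⊥

/-- A closed subspace `S` is pseudo-regular if `S = M [∔] S°` for some regular subspace `M`,
where `S° = S ⊓ S^{[⊥]}` is the isotropic part. -/
def KreinPseudoRegular (J : H →L[ℂ] H) (S : Submodule ℂ H) : Prop :=
  IsClosed (S : Set H) ∧ ∃ M : Submodule ℂ H, KreinRegular J M ∧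
    M ⊔ (S ⊓ jperp J S) = S ∧ M ⊓ (S ⊓ jperp J S) = ⊥

/-!
Write `Pᵢ = Qᵢ^#` and `N = Q₁ - Q₂`. Idempotents with a common range satisfy `Q₁Q₂ = Q₂` and
`Q₂Q₁ = Q₁`, so `N² = 0` and `NQ₁ = 0`. The `J`-selfadjoint projections `QᵢPᵢ` both have range
`M`, hence coincide; consequently `P₁N = P₂N = 0`. With these identities
`U = 1 + N - N^# - NP₁` is `J`-unitary, `UQ₁ = Q₁` (so `U` is the identity on `S`, which contains
`M` and `S°`) and `Q₁U^# = Q₂`. Only ring identities are involved, so the construction works in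
any ring with an anti-multiplicative involution.
-/

theorem IsIdempotentElem.of_mul_eq_of_mul_eq {M : Type*} [Semigroup M] {a b : M}
    (hab : a * b = b) (hba : b * a = a) : IsIdempotentElem a :=
  calc a * a = a * (b * a) := by rw [hba]
    _ = a := by rw [← mul_assoc, hab, hba]

theorem Submodule.map_eq_self_of_eqOn {R M : Type*} [Semiring R] [AddCommMonoid M] [Module R M]
    {f : M →ₗ[R] M} {p : Submodule R M} (h : Set.EqOn f id p) : p.map f = p :=
  SetLike.coe_injective <| (Submodule.map_coe f p).trans h.image_eq_self

theorem ContinuousLinearMap.mul_eq_right_of_range_le {R M : Type*} [Semiring R]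
    [TopologicalSpace M] [AddCommMonoid M] [Module R M] {Q T : M →L[R] M}
    (hQ : IsIdempotentElem Q)
    (h : LinearMap.range (T : M →ₗ[R] M) ≤ LinearMap.range (Q : M →ₗ[R] M)) : Q * T = T :=
  coe_inj.mp <| (LinearMap.IsIdempotentElem.comp_eq_right_iff hQ.toLinearMap _).mpr h

section InvolutiveRing

variable {R : Type*} [Ring R] {σ : R →+ R}

theorem map_one_of_map_mul_of_involutive (hmul : ∀ a b, σ (a * b) = σ b * σ a)
    (hinv : ∀ a, σ (σ a) = a) : σ 1 = 1 :=
  calc σ 1 = σ 1 * σ (σ 1) := by rw [hinv, mul_one]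
    _ = σ (σ 1 * 1) := (hmul _ _).symm
    _ = 1 := by rw [mul_one, hinv]

theorem map_mul_map_eq_zero_of_mul_eq_zero (hmul : ∀ a b, σ (a * b) = σ b * σ a) {a b : R}
    (h : a * b = 0) : σ b * σ a = 0 := by
  rw [← hmul, h, map_zero]

theorem IsIdempotentElem.mul_map_self (hmul : ∀ a b, σ (a * b) = σ b * σ a) {Q : R}
    (hQ : IsIdempotentElem Q) (hn : Commute Q (σ Q)) : IsIdempotentElem (Q * σ Q) :=
  hQ.mul_of_commute hn <| by rw [IsIdempotentElem, ← hmul, hQ.eq]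

theorem map_mul_map_self (hmul : ∀ a b, σ (a * b) = σ b * σ a) (hinv : ∀ a, σ (σ a) = a)
    (Q : R) : σ (Q * σ Q) = Q * σ Q := by
  rw [hmul, hinv]

theorem eq_of_map_eq_self_of_mul_eq_of_mul_eq (hmul : ∀ a b, σ (a * b) = σ b * σ a) {E F : R}
    (hE : σ E = E) (hF : σ F = F) (hFE : F * E = E) (hEF : E * F = F) : E = F :=
  calc E = σ (F * E) := by rw [hFE, hE]
    _ = F := by rw [hmul, hE, hF, hEF]

theorem map_mul_eq_map_mul_self (hmul : ∀ a b, σ (a * b) = σ b * σ a) {Q₁ Q₂ : R}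
    (h₁₂ : Q₁ * Q₂ = Q₂) (h₂₁ : Q₂ * Q₁ = Q₁) (hn₁ : Commute Q₁ (σ Q₁))
    (hn₂ : Commute Q₂ (σ Q₂)) (hE : Q₁ * σ Q₁ = Q₂ * σ Q₂) : σ Q₁ * Q₂ = σ Q₁ * Q₁ := by
  have hP : σ Q₁ * σ Q₁ = σ Q₁ := by
    rw [← hmul, (IsIdempotentElem.of_mul_eq_of_mul_eq h₁₂ h₂₁).eq]
  have hPP : σ Q₁ * σ Q₂ = σ Q₁ := by rw [← hmul, h₂₁]
  have hn₁' : Q₁ * σ Q₁ = σ Q₁ * Q₁ := hn₁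
  have hn₂' : Q₂ * σ Q₂ = σ Q₂ * Q₂ := hn₂
  linear_combination (norm := noncomm_ring)
    -(hPP * Q₂) - σ Q₁ * hn₂' - σ Q₁ * hE + σ Q₁ * hn₁' + hP * Q₁

theorem exists_unitary_mul_eq_self_and_conj_eq (hmul : ∀ a b, σ (a * b) = σ b * σ a)
    (hinv : ∀ a, σ (σ a) = a) {Q₁ Q₂ : R} (h₁₂ : Q₁ * Q₂ = Q₂) (h₂₁ : Q₂ * Q₁ = Q₁)
    (hn₁ : Commute Q₁ (σ Q₁)) (hn₂ : Commute Q₂ (σ Q₂)) (hE : Q₁ * σ Q₁ = Q₂ * σ Q₂) :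
    ∃ U : R, U * σ U = 1 ∧ σ U * U = 1 ∧ U * Q₁ = Q₁ ∧ U * Q₁ * σ U = Q₂ := by
  obtain ⟨P, hP⟩ : ∃ P, σ Q₁ = P := ⟨_, rfl⟩
  obtain ⟨N, hN⟩ : ∃ N, Q₁ - Q₂ = N := ⟨_, rfl⟩
  obtain ⟨N', hN'⟩ : ∃ N', σ N = N' := ⟨_, rfl⟩
  have hQ : Q₁ * Q₁ = Q₁ := (IsIdempotentElem.of_mul_eq_of_mul_eq h₁₂ h₂₁).eq
  have hn : Q₁ * P = P * Q₁ := hP ▸ hn₁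
  have hQN : Q₁ * N = N := by rw [← hN, mul_sub, hQ, h₁₂]
  have hNQ : N * Q₁ = 0 := by rw [← hN, sub_mul, hQ, h₂₁, sub_self]
  have hNN : N * N = 0 := by linear_combination (norm := noncomm_ring) hNQ * N - N * hQN
  have hPN : P * N = 0 := by
    rw [← hP, ← hN, mul_sub, map_mul_eq_map_mul_self hmul h₁₂ h₂₁ hn₁ hn₂ hE, sub_self]
  have hN'N : N' * N = 0 := by
    have h₂ := map_mul_eq_map_mul_self hmul h₂₁ h₁₂ hn₂ hn₁ hE.symm
    rw [← hN', ← hN, map_sub, hP]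
    linear_combination (norm := noncomm_ring) hPN - h₂ + P * hN
  have hN'Q : N' * Q₁ = 0 := by
    simpa only [← hP, ← hN', hinv] using map_mul_map_eq_zero_of_mul_eq_zero hmul hPN
  have hPN' : P * N' = 0 := hP ▸ hN' ▸ map_mul_map_eq_zero_of_mul_eq_zero hmul hNQ
  have hN'N' : N' * N' = 0 := hN' ▸ map_mul_map_eq_zero_of_mul_eq_zero hmul hNN
  have hNN' : N * N' = Q₁ * N' + N * P := by
    rw [← hN', ← hN, map_sub, hP]
    rw [hP] at hE
    linear_combination (norm := noncomm_ring) -hE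
  have hσU : σ (1 + N - N' - N * P) = 1 + N' - N - Q₁ * N' := by
    rw [map_sub, map_sub, map_add, map_one_of_map_mul_of_involutive hmul hinv, hmul, hN', ← hP,
      hinv, ← hN', hinv]
  have hUQ : (1 + N - N' - N * P) * Q₁ = Q₁ := by
    linear_combination (norm := noncomm_ring) hNQ - hN'Q - hNQ * P + N * hn
  refine ⟨1 + N - N' - N * P, ?_, ?_, hUQ, ?_⟩ <;> rw [hσU]
  · linear_combination (norm := noncomm_ring) hNN' - hNN + hN'N - hN'N' + hN'Q * N' - hNQ * N' +
      N * hPN - N * hPN' + hNQ * P * N' - N * hn * N'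
  · linear_combination (norm := noncomm_ring) hNN' + hN'N - hN'N' - hN'N * P - hNN + hNN * P -
      Q₁ * hN'N + Q₁ * hN'N' + Q₁ * hN'N * P
  · rw [hUQ]
    linear_combination (norm := noncomm_ring) -(hQ * N') - hQN + hN

end InvolutiveRing

theorem ContinuousLinearMap.mul_map_self_eq_of_range_eq {R E : Type*} [Ring R] [AddCommGroup E]
    [TopologicalSpace E] [IsTopologicalAddGroup E] [Module R E] {σ : (E →L[R] E) →+ (E →L[R] E)}
    (hmul : ∀ a b, σ (a * b) = σ b * σ a) (hinv : ∀ a, σ (σ a) = a) {Q₁ Q₂ : E →L[R] E}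
    (hQ₁ : IsIdempotentElem Q₁) (hQ₂ : IsIdempotentElem Q₂) (hn₁ : Commute Q₁ (σ Q₁))
    (hn₂ : Commute Q₂ (σ Q₂))
    (h : LinearMap.range ((Q₁ * σ Q₁ : E →L[R] E) : E →ₗ[R] E) =
      LinearMap.range ((Q₂ * σ Q₂ : E →L[R] E) : E →ₗ[R] E)) :
    Q₁ * σ Q₁ = Q₂ * σ Q₂ :=
  eq_of_map_eq_self_of_mul_eq_of_mul_eq hmul (map_mul_map_self hmul hinv Q₁)
    (map_mul_map_self hmul hinv Q₂) (mul_eq_right_of_range_le (hQ₂.mul_map_self hmul hn₂) h.le)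
    (mul_eq_right_of_range_le (hQ₁.mul_map_self hmul hn₁) h.ge)

section Sharp

variable {J : H →L[ℂ] H}

theorem sharp_add (A B : H →L[ℂ] H) : sharp J (A + B) = sharp J A + sharp J B := by
  simp only [sharp, map_add, add_comp, comp_add]

theorem sharp_mul (hJ2 : J ∘L J = 1) (A B : H →L[ℂ] H) :
    sharp J (A * B) = sharp J B * sharp J A := by
  simp only [sharp, mul_def, adjoint_comp, comp_assoc]
  rw [← comp_assoc J J, hJ2, one_def, id_comp]

theorem sharp_sharp (hJsa : adjoint J = J) (hJ2 : J ∘L J = 1) (A : H →L[ℂ] H) :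
    sharp J (sharp J A) = A := by
  simp only [sharp, adjoint_comp, adjoint_adjoint, hJsa, comp_assoc]
  rw [hJ2, one_def, comp_id, ← comp_assoc, hJ2, one_def, id_comp]

variable (J) in
noncomputable def sharpHom : (H →L[ℂ] H) →+ (H →L[ℂ] H) :=
  AddMonoidHom.mk' (sharp J) sharp_add

end Sharp

theorem stmt19_general (J : H →L[ℂ] H)
    (hJsa : ContinuousLinearMap.adjoint J = J) (hJ2 : J ∘L J = 1)
    (S M : Submodule ℂ H)
    (Q₁ Q₂ : H →L[ℂ] H)
    (hQ₁ : Q₁ ∘L Q₁ = Q₁) (hQ₁n : Q₁ ∘L sharp J Q₁ = sharp J Q₁ ∘L Q₁)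
    (hQ₁S : LinearMap.range (Q₁ : H →ₗ[ℂ] H) = S) (hQ₁M : LinearMap.range ((Q₁ ∘L sharp J Q₁ : H →L[ℂ] H) : H →ₗ[ℂ] H) = M)
    (hQ₂ : Q₂ ∘L Q₂ = Q₂) (hQ₂n : Q₂ ∘L sharp J Q₂ = sharp J Q₂ ∘L Q₂)
    (hQ₂S : LinearMap.range (Q₂ : H →ₗ[ℂ] H) = S) (hQ₂M : LinearMap.range ((Q₂ ∘L sharp J Q₂ : H →L[ℂ] H) : H →ₗ[ℂ] H) = M) :
    ∃ U : H →L[ℂ] H, U ∘L sharp J U = 1 ∧ sharp J U ∘L U = 1 ∧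
      Submodule.map (U : H →ₗ[ℂ] H) M = M ∧
      Submodule.map (U : H →ₗ[ℂ] H) (S ⊓ jperp J S) = S ⊓ jperp J S ∧
      Q₂ = U ∘L Q₁ ∘L sharp J U := by
  have hi₁ : IsIdempotentElem Q₁ := hQ₁
  have hi₂ : IsIdempotentElem Q₂ := hQ₂
  have hmul : ∀ A B, sharpHom J (A * B) = sharpHom J B * sharpHom J A := sharp_mul hJ2
  have hinv : ∀ A, sharpHom J (sharpHom J A) = A := sharp_sharp hJsa hJ2
  have hE : Q₁ * sharpHom J Q₁ = Q₂ * sharpHom J Q₂ :=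
    mul_map_self_eq_of_range_eq hmul hinv hi₁ hi₂ hQ₁n hQ₂n (hQ₁M.trans hQ₂M.symm)
  obtain ⟨U, hU, hU', hUQ, hconj⟩ := exists_unitary_mul_eq_self_and_conj_eq hmul hinv
    (mul_eq_right_of_range_le hi₁ (hQ₂S.trans hQ₁S.symm).le)
    (mul_eq_right_of_range_le hi₂ (hQ₁S.trans hQ₂S.symm).le) hQ₁n hQ₂n hE
  have hfix : Set.EqOn U id S := fun x hx ↦ by
    rw [← hQ₁S, SetLike.mem_coe, (LinearMap.IsIdempotentElem.mem_range_iff hi₁.toLinearMap)] at hx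
    rw [id, ← hx, coe_coe, ← mul_apply_eq_comp, hUQ]
  have hMS : M ≤ S := by
    rw [← hQ₁M, ← hQ₁S]
    exact LinearMap.range_comp_le_range _ _
  exact ⟨U, hU, hU', Submodule.map_eq_self_of_eqOn (hfix.mono hMS),
    Submodule.map_eq_self_of_eqOn (hfix.mono inf_le_left), hconj.symm⟩

/-- The group `U_{M,S°}` acts transitively on `Q_{S,M}`: given two `J`-normal projections with
range `S` whose regular parts both have range `M`, some `J`-unitary preserving `M` and `S°`
conjugates one into the other. -/
theorem stmt19 (J : H →L[ℂ] H)
    (hJsa : ContinuousLinearMap.adjoint J = J) (hJ2 : J ∘L J = 1)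
    (S M : Submodule ℂ H) (hSc : IsClosed (S : Set H))
    (hM : KreinRegular J M)
    (hsup : M ⊔ (S ⊓ jperp J S) = S) (hinf : M ⊓ (S ⊓ jperp J S) = ⊥)
    (Q₁ Q₂ : H →L[ℂ] H)
    (hQ₁ : Q₁ ∘L Q₁ = Q₁) (hQ₁n : Q₁ ∘L sharp J Q₁ = sharp J Q₁ ∘L Q₁)
    (hQ₁S : LinearMap.range (Q₁ : H →ₗ[ℂ] H) = S) (hQ₁M : LinearMap.range ((Q₁ ∘L sharp J Q₁ : H →L[ℂ] H) : H →ₗ[ℂ] H) = M)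
    (hQ₂ : Q₂ ∘L Q₂ = Q₂) (hQ₂n : Q₂ ∘L sharp J Q₂ = sharp J Q₂ ∘L Q₂)
    (hQ₂S : LinearMap.range (Q₂ : H →ₗ[ℂ] H) = S) (hQ₂M : LinearMap.range ((Q₂ ∘L sharp J Q₂ : H →L[ℂ] H) : H →ₗ[ℂ] H) = M) :
    ∃ U : H →L[ℂ] H, U ∘L sharp J U = 1 ∧ sharp J U ∘L U = 1 ∧
      Submodule.map (U : H →ₗ[ℂ] H) M = M ∧
      Submodule.map (U : H →ₗ[ℂ] H) (S ⊓ jperp J S) = S ⊓ jperp J S ∧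
      Q₂ = U ∘L Q₁ ∘L sharp J U :=
  stmt19_general J hJsa hJ2 S M Q₁ Q₂ hQ₁ hQ₁n hQ₁S hQ₁M hQ₂ hQ₂n hQ₂S hQ₂M
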